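/- arXiv:1002.4171 — 3 statements merged into one kernel-verified Lean document; each statement's English description precedes it below -/
import Mathlib

section
/- The Khinchin constant satisfies 2 < K_0 < 3, where K_0 = ∏_{m=1}^∞ (1 + 1/(m(m+2)))^{log_2 m}. -/
/-!
Write `D k = log (1 + 1/k)`. The factor exponent is `log (1 + 1/(m(m+2))) = D m - D (m+1)`, so
summation by parts (the boundary term `D (N+1) log N` tends to `0`) gives
`log 2 · log K₀ = ∑_{k ≥ 1} D k · D (k+1)`.
Since `1/(k+1) ≤ D k ≤ 1/k`, the terms lie between telescoping terms: the sum is at least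
`∑ 1/((k+1)(k+2)) = 1/2 > (log 2)²`, and, keeping the terms `k = 1, 2` exact, at most
`log 2 · log (3/2) + log (3/2) · log (4/3) + 1/3 < log 2 · log 3`.
-/

open Real Filter Topology Finset

theorem hasSum_sub_succ_of_antitone {f : ℕ → ℝ} {l : ℝ} (hf : Antitone f)
    (hl : Tendsto f atTop (𝓝 l)) : HasSum (fun n => f n - f (n + 1)) (f 0 - l) := by
  rw [hasSum_iff_tendsto_nat_of_nonneg (fun n => sub_nonneg.2 (hf n.le_succ))]
  simp_rw [sum_range_sub']
  exact tendsto_const_nhds.sub hl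

theorem hasSum_one_div_mul_add_one {a : ℝ} (ha : 0 < a) :
    HasSum (fun n : ℕ => 1 / ((n + a) * (n + a + 1))) (1 / a) := by
  have hanti : Antitone fun n : ℕ => 1 / ((n : ℝ) + a) := fun m n hmn =>
    one_div_le_one_div_of_le (by positivity) (by gcongr)
  have hlim : Tendsto (fun n : ℕ => 1 / ((n : ℝ) + a)) atTop (𝓝 0) := by
    simpa only [one_div, Function.comp_def] using tendsto_inv_atTop_zero.comp
      (tendsto_atTop_add_const_right _ a tendsto_natCast_atTop_atTop)
  convert hasSum_sub_succ_of_antitone hanti hlim using 1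
  · funext n
    have : (0 : ℝ) < n + a := by positivity
    push_cast
    field_simp
    ring
  · simp

theorem sum_range_succ_neg_secondDiff_mul {R : Type*} [CommRing R] (x : ℕ → R) (N : ℕ) :
    ∑ i ∈ range (N + 1), (2 * x (i + 1) - x i - x (i + 2)) * x i =
      x 0 * (x 1 - x 0) + ∑ i ∈ range N, (x (i + 1) - x i) * (x (i + 2) - x (i + 1)) -
        (x (N + 2) - x (N + 1)) * x N := by
  induction N with
  | zero => rw [zero_add, sum_range_one, sum_range_zero]; ring
  | succ N ih => rw [sum_range_succ, ih, sum_range_succ]; ring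

theorem hasSum_neg_secondDiff_mul {x : ℕ → ℝ} {S : ℝ}
    (hnonneg : ∀ i, 0 ≤ (2 * x (i + 1) - x i - x (i + 2)) * x i)
    (hS : HasSum (fun i => (x (i + 1) - x i) * (x (i + 2) - x (i + 1))) S)
    (hboundary : Tendsto (fun N => (x (N + 2) - x (N + 1)) * x N) atTop (𝓝 0)) :
    HasSum (fun i => (2 * x (i + 1) - x i - x (i + 2)) * x i) (x 0 * (x 1 - x 0) + S) := by
  rw [hasSum_iff_tendsto_nat_of_nonneg hnonneg, ← tendsto_add_atTop_iff_nat 1]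
  simp_rw [sum_range_succ_neg_secondDiff_mul]
  simpa using (tendsto_const_nhds.add hS.tendsto_sum_nat).sub hboundary

theorem one_div_add_one_le_log_add_one_sub_log {t : ℝ} (ht : 0 < t) :
    1 / (t + 1) ≤ log (t + 1) - log t := by
  have h := one_sub_inv_le_log_of_pos (div_pos (by linarith : 0 < t + 1) ht)
  rw [log_div (by linarith) ht.ne', inv_div] at h
  calc 1 / (t + 1) = 1 - t / (t + 1) := by field_simp; ring
    _ ≤ _ := h

theorem log_add_one_sub_log_le_one_div {t : ℝ} (ht : 0 < t) :
    log (t + 1) - log t ≤ 1 / t := by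
  have h := log_le_sub_one_of_pos (div_pos (by linarith : 0 < t + 1) ht)
  rw [log_div (by linarith) ht.ne'] at h
  calc _ ≤ (t + 1) / t - 1 := h
    _ = 1 / t := by field_simp; ring

theorem log_one_add_inv_mul_add_two {t : ℝ} (ht : 0 < t) :
    log (1 + 1 / (t * (t + 2))) = 2 * log (t + 1) - log t - log (t + 2) := by
  have h : 1 + 1 / (t * (t + 2)) = (t + 1) ^ 2 / (t * (t + 2)) := by field_simp; ring
  rw [h, log_div (by positivity) (by positivity), log_mul ht.ne' (by positivity), log_pow]
  push_cast; ring

theorem tendsto_log_gap_mul_log :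
    Tendsto (fun N : ℕ => (log ((N : ℝ) + 3) - log ((N : ℝ) + 2)) * log ((N : ℝ) + 1)) atTop
      (𝓝 0) := by
  have hlim :
      Tendsto (fun N : ℕ => log ((N : ℝ) + 1) ^ 1 / (1 * ((N : ℝ) + 1) + 1)) atTop (𝓝 0) :=
    (tendsto_pow_log_div_mul_add_atTop 1 1 1 one_ne_zero).comp
      (tendsto_atTop_add_const_right _ 1 tendsto_natCast_atTop_atTop)
  refine squeeze_zero (fun N => ?_) (fun N => ?_) hlim
  all_goals
    have h₁ := one_div_add_one_le_log_add_one_sub_log (t := (N : ℝ) + 2) (by positivity)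
    have h₂ := log_add_one_sub_log_le_one_div (t := (N : ℝ) + 2) (by positivity)
    rw [show (N : ℝ) + 2 + 1 = N + 3 by ring] at h₁ h₂
    have hlog : 0 ≤ log ((N : ℝ) + 1) := log_nonneg (by linarith [N.cast_nonneg (α := ℝ)])
  · exact mul_nonneg (le_trans (by positivity) h₁) hlog
  · calc _ ≤ 1 / ((N : ℝ) + 2) * log ((N : ℝ) + 1) := mul_le_mul_of_nonneg_right h₂ hlog
      _ = _ := by ring

-- `log (1 + 1/k) · log (1 + 1/(k+1))` at `k = n + 1`
noncomputable def logGapMul (n : ℕ) : ℝ :=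
  (log (n + 2) - log (n + 1)) * (log (n + 3) - log (n + 2))

theorem logGapMul_mem_Icc (n : ℕ) :
    logGapMul n ∈
      Set.Icc (1 / (((n : ℝ) + 2) * (n + 2 + 1))) (1 / (((n : ℝ) + 1) * (n + 1 + 1))) := by
  have h₁ := one_div_add_one_le_log_add_one_sub_log (t := (n : ℝ) + 1) (by positivity)
  have h₂ := one_div_add_one_le_log_add_one_sub_log (t := (n : ℝ) + 2) (by positivity)
  have h₃ := log_add_one_sub_log_le_one_div (t := (n : ℝ) + 1) (by positivity)
  have h₄ := log_add_one_sub_log_le_one_div (t := (n : ℝ) + 2) (by positivity)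
  rw [show (n : ℝ) + 1 + 1 = n + 2 by ring] at h₁ h₃ ⊢
  rw [show (n : ℝ) + 2 + 1 = n + 3 by ring] at h₂ h₄ ⊢
  have : (0 : ℝ) < 1 / (n + 3) := by positivity
  rw [logGapMul, ← one_div_mul_one_div, ← one_div_mul_one_div]
  constructor
  · exact mul_le_mul h₁ h₂ this.le (by linarith)
  · exact mul_le_mul h₃ h₄ (by linarith) (by positivity)

theorem summable_logGapMul : Summable logGapMul :=
  (hasSum_one_div_mul_add_one one_pos).summable.of_nonneg_of_le
    (fun n => le_trans (by positivity) (logGapMul_mem_Icc n).1)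
    (fun n => (logGapMul_mem_Icc n).2)

theorem log_two_sq_lt_tsum_logGapMul : log 2 ^ 2 < ∑' n, logGapMul n := by
  have h : (1 : ℝ) / 2 ≤ ∑' n, logGapMul n :=
    hasSum_le (fun n => (logGapMul_mem_Icc n).1) (hasSum_one_div_mul_add_one two_pos)
      summable_logGapMul.hasSum
  nlinarith [log_two_lt_d9, log_two_gt_d9]

theorem tsum_logGapMul_lt_log_two_mul_log_three : ∑' n, logGapMul n < log 2 * log 3 := by
  have htail : ∑' n, logGapMul (n + 2) ≤ 1 / 3 := by
    refine hasSum_le (fun n => ?_) ((summable_nat_add_iff 2).2 summable_logGapMul).hasSum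
      (hasSum_one_div_mul_add_one three_pos)
    have := (logGapMul_mem_Icc (n + 2)).2
    push_cast at this
    convert this using 3 <;> ring
  have h₀ : logGapMul 0 = log 2 * (log 3 - log 2) := by norm_num [logGapMul]
  have h₁ : logGapMul 1 = (log 3 - log 2) * (2 * log 2 - log 3) := by
    rw [logGapMul, show ((1 : ℕ) : ℝ) + 3 = 2 ^ 2 by norm_num, log_pow]
    norm_num
  rw [← summable_logGapMul.sum_add_tsum_nat_add 2, sum_range_succ, sum_range_one, h₀, h₁]
  -- completing the square in `log 3` leaves `(log 2)² > 4/9`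
  nlinarith [sq_nonneg (log 3 - 3 / 2 * log 2), log_two_gt_d9]

theorem hasSum_log_one_add_inv_mul_log :
    HasSum
      (fun n : ℕ => log (1 + 1 / (((n : ℝ) + 1) * ((n : ℝ) + 1 + 2))) * log ((n : ℝ) + 1))
      (∑' n, logGapMul n) := by
  set x : ℕ → ℝ := fun n => log ((n : ℝ) + 1) with hx
  have hterm (n : ℕ) : log (1 + 1 / (((n : ℝ) + 1) * ((n : ℝ) + 1 + 2))) =
      2 * x (n + 1) - x n - x (n + 2) := by
    rw [log_one_add_inv_mul_add_two (by positivity)]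
    simp only [hx]; push_cast; ring_nf
  have hnonneg (n : ℕ) : 0 ≤ (2 * x (n + 1) - x n - x (n + 2)) * x n := by
    rw [← hterm]
    exact mul_nonneg (log_nonneg (le_add_of_nonneg_right (by positivity)))
      (log_nonneg (le_add_of_nonneg_left n.cast_nonneg))
  have hS :
      HasSum (fun n => (x (n + 1) - x n) * (x (n + 2) - x (n + 1))) (∑' n, logGapMul n) := by
    refine summable_logGapMul.hasSum.congr_fun fun n => ?_
    simp only [hx, logGapMul]; push_cast; ring_nf
  have hboundary : Tendsto (fun N => (x (N + 2) - x (N + 1)) * x N) atTop (𝓝 0) := by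
    refine tendsto_log_gap_mul_log.congr fun N => ?_
    simp only [hx]; push_cast; ring_nf
  have key := hasSum_neg_secondDiff_mul hnonneg hS hboundary
  rw [show x 0 = 0 by simp [hx], zero_mul, zero_add] at key
  simpa only [hterm] using key

/-- The Khinchin constant `K₀ = ∏_{m≥1} (1 + 1/(m(m+2)))^{log₂ m}` satisfies `2 < K₀ < 3`. -/
theorem khinchin_constant_between_two_and_three :
    2 < ∏' m : ℕ+, (1 + 1 / ((m : ℝ) * ((m : ℝ) + 2))) ^ Real.logb 2 (m : ℝ) ∧
    (∏' m : ℕ+, (1 + 1 / ((m : ℝ) * ((m : ℝ) + 2))) ^ Real.logb 2 (m : ℝ)) < 3 := by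
  set S := ∑' n, logGapMul n
  have hsum : HasSum (fun m : ℕ+ => log (1 + 1 / ((m : ℝ) * ((m : ℝ) + 2))) * logb 2 m)
      (S / log 2) := by
    rw [hasSum_pnat_iff_hasSum_succ
      (f := fun m : ℕ => log (1 + 1 / ((m : ℝ) * (m + 2))) * logb 2 m)]
    simpa only [Nat.cast_add_one, logb, mul_div_assoc] using
      hasSum_log_one_add_inv_mul_log.div_const (log 2)
  have hK : ∏' m : ℕ+, (1 + 1 / ((m : ℝ) * ((m : ℝ) + 2))) ^ logb 2 (m : ℝ) =
      exp (S / log 2) := by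
    rw [← hsum.rexp.tprod_eq]
    congr 1 with m
    rw [Function.comp_apply, rpow_def_of_pos (by positivity)]
  rw [hK, ← log_lt_iff_lt_exp two_pos, lt_div_iff₀ (log_pos one_lt_two), ← exp_log three_pos,
    exp_lt_exp, div_lt_iff₀ (log_pos one_lt_two)]
  exact ⟨by linarith [log_two_sq_lt_tsum_logGapMul],
    by linarith [tsum_logGapMul_lt_log_two_mul_log_three]⟩
end

section
/- For almost every real number r (with respect to Lebesgue measure), the arithmetic mean (a_1(r) + ... + a_n(r))/n of the partial quotients of the continued fraction expansion of r tends to infinity as n → ∞. -/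
/-!
Write `S n x` (`partialQuotientSum`) for the sum of the first `n` partial quotients of
`x ∈ [0, 1)`; it suffices to treat such `x`, by translation invariance. For every `M` a
Chernoff bound shows that `{x | S n x ≤ M n}` has measure `O(e^{-tn})` for some `t > 0`, so by
Borel–Cantelli almost every `x` satisfies `S n x > M n` for all large `n`.

The exponential moments `∫ exp (-t S n) ρ_z` (`laplaceIntegral`) against the densities
`ρ_z y = (1 + z) / (1 + z y)²` (`gaussDensity`) satisfy a recursion over the first partial
quotient: the branch `a₁ = j + 1` contributes the weight
`w_j(z) = (1 + z) / ((j + 1 + z) (j + 2 + z))` (`branchWeight`) and replaces `z` by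
`1 / (j + 1 + z)`. The weights sum to `1` but decay only like `j⁻²`, so
`∑ⱼ e^{-t(j+1)} w_j(z) ≤ e^{-tA}` uniformly in `z` once `t` is small, for any prescribed `A`;
iterating, the moments are at most `2 e^{-tAn}`.
-/

/-- The Gauss map `T x = {1/x}` (fractional part of `1/x`). -/
noncomputable def gaussMap (x : ℝ) : ℝ := Int.fract x⁻¹

open MeasureTheory Filter Set Real
open scoped ENNReal

noncomputable def partialQuotientSum (n : ℕ) (x : ℝ) : ℝ :=
  ∑ k ∈ Finset.range n, (⌊(gaussMap^[k] x)⁻¹⌋ : ℝ)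

@[fun_prop]
lemma measurable_gaussMap : Measurable gaussMap :=
  measurable_fract.comp measurable_inv

@[fun_prop]
lemma measurable_partialQuotientSum (n : ℕ) : Measurable (partialQuotientSum n) := by
  unfold partialQuotientSum
  fun_prop

lemma partialQuotientSum_succ (n : ℕ) (x : ℝ) :
    partialQuotientSum (n + 1) x = ⌊x⁻¹⌋ + partialQuotientSum n (gaussMap x) := by
  simp only [partialQuotientSum, Finset.sum_range_succ', Function.iterate_succ_apply,
    Function.iterate_zero_apply]
  ring

lemma partialQuotientSum_succ_inv_natCast_add {d : ℕ} {u : ℝ} (hu : u ∈ Ico 0 1) (n : ℕ) :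
    partialQuotientSum (n + 1) (d + u)⁻¹ = d + partialQuotientSum n u := by
  have hd : ((d : ℤ) : ℝ) + u = d + u := by push_cast; rfl
  rw [partialQuotientSum_succ, inv_inv, gaussMap, inv_inv, ← hd, Int.floor_intCast_add,
    Int.fract_intCast_add, Int.floor_eq_zero_iff.2 hu, Int.fract_eq_self.2 hu]
  push_cast
  ring

noncomputable def gaussDensity (z y : ℝ) : ℝ := (1 + z) / (1 + z * y) ^ 2

noncomputable def branchWeight (z : ℝ) (j : ℕ) : ℝ := (1 + z) / ((j + 1 + z) * (j + 2 + z))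

lemma gaussDensity_zero (y : ℝ) : gaussDensity 0 y = 1 := by
  simp [gaussDensity]

lemma gaussDensity_le_two {z y : ℝ} (hz : z ∈ Icc 0 1) (hy : 0 ≤ y) : gaussDensity z y ≤ 2 := by
  obtain ⟨hz0, hz1⟩ := hz
  have h : 1 ≤ (1 + z * y) ^ 2 := one_le_pow₀ (by nlinarith)
  rw [gaussDensity, div_le_iff₀ (by positivity)]
  nlinarith

lemma inv_sq_mul_gaussDensity {z x : ℝ} (hz : 0 ≤ z) (hx : 0 ≤ x) (j : ℕ) :
    1 / ((j + 1 + x) ^ 2) * gaussDensity z (j + 1 + x)⁻¹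
      = branchWeight z j * gaussDensity (j + 1 + z)⁻¹ x := by
  unfold gaussDensity branchWeight
  field_simp
  ring

lemma branchWeight_nonneg {z : ℝ} (hz : 0 ≤ z) (j : ℕ) : 0 ≤ branchWeight z j := by
  unfold branchWeight
  positivity

lemma hasSum_branchWeight {z : ℝ} (hz : 0 ≤ z) : HasSum (branchWeight z) 1 := by
  set f : ℕ → ℝ := fun j => (1 + z) / (j + 1 + z)
  have h_telescope (j : ℕ) : branchWeight z j = f j - f (j + 1) := by
    simp only [branchWeight, f]
    field_simp
    push_cast
    ring
  have h_partial (n : ℕ) : ∑ j ∈ Finset.range n, branchWeight z j = 1 - f n := by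
    simp only [h_telescope, Finset.sum_range_sub', f]
    rw [Nat.cast_zero, zero_add, div_self (by positivity)]
  have hf : Tendsto f atTop (nhds 0) :=
    tendsto_const_nhds.div_atTop <| tendsto_atTop_add_const_right _ _ <|
      tendsto_atTop_add_const_right _ _ tendsto_natCast_atTop_atTop
  rw [hasSum_iff_tendsto_nat_of_nonneg (branchWeight_nonneg hz)]
  simpa [h_partial] using (tendsto_const_nhds (x := (1 : ℝ))).sub hf

lemma inv_six_mul_sq_le_branchWeight {z : ℝ} (hz : z ∈ Icc 0 1) (j : ℕ) :
    1 / (6 * (j + 1) ^ 2) ≤ branchWeight z j := by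
  obtain ⟨hz0, hz1⟩ := hz
  rw [branchWeight, div_le_div_iff₀ (by positivity) (by positivity)]
  have hj : (0 : ℝ) ≤ j := j.cast_nonneg
  nlinarith [mul_nonneg hj hz0, mul_nonneg (mul_nonneg hj hj) hz0]

noncomputable def laplaceIntegral (t : ℝ) (n : ℕ) (z : ℝ) : ℝ≥0∞ :=
  ∫⁻ y in Ico 0 1, ENNReal.ofReal (exp (-(t * partialQuotientSum n y)) * gaussDensity z y)

lemma Ioc_subset_iUnion_image_inv_add :
    Ioc (0 : ℝ) 1 ⊆ ⋃ j : ℕ, (fun u => ((j : ℝ) + 1 + u)⁻¹) '' Ico 0 1 := by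
  intro y ⟨hy0, hy1⟩
  have h_floor : 1 ≤ ⌊y⁻¹⌋ := Int.le_floor.2 (by exact_mod_cast one_le_inv₀ hy0 |>.2 hy1)
  obtain ⟨j, hj⟩ : ∃ j : ℕ, ⌊y⁻¹⌋ = j + 1 := ⟨(⌊y⁻¹⌋ - 1).toNat, by omega⟩
  have h_decomp := Int.floor_add_fract y⁻¹
  rw [hj] at h_decomp
  push_cast at h_decomp
  refine mem_iUnion.2 ⟨j, Int.fract y⁻¹, ⟨Int.fract_nonneg _, Int.fract_lt_one _⟩, ?_⟩
  simp only [h_decomp, inv_inv]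

lemma setLIntegral_image_inv_add (t : ℝ) (n : ℕ) {z : ℝ} (hz : 0 ≤ z) (j : ℕ) :
    ∫⁻ y in (fun u => ((j : ℝ) + 1 + u)⁻¹) '' Ico 0 1,
        ENNReal.ofReal (exp (-(t * partialQuotientSum (n + 1) y)) * gaussDensity z y)
      = ENNReal.ofReal (exp (-(t * (j + 1))) * branchWeight z j)
          * laplaceIntegral t n (j + 1 + z)⁻¹ := by
  have h_deriv (u : ℝ) (hu : u ∈ Ico (0 : ℝ) 1) :
      HasDerivWithinAt (fun u => ((j : ℝ) + 1 + u)⁻¹) (-1 / ((j : ℝ) + 1 + u) ^ 2) (Ico 0 1) u := by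
    simpa using ((hasDerivWithinAt_id u _).const_add ((j : ℝ) + 1)).fun_inv
      (by have := hu.1; positivity)
  have h_inj : InjOn (fun u => ((j : ℝ) + 1 + u)⁻¹) (Ico 0 1) := fun u _ v _ huv => by
    simpa using inv_injective huv
  rw [lintegral_image_eq_lintegral_abs_deriv_mul measurableSet_Ico h_deriv h_inj, laplaceIntegral,
    ← lintegral_const_mul' _ _ ENNReal.ofReal_ne_top]
  refine setLIntegral_congr_fun measurableSet_Ico fun u hu => ?_
  have hu0 : 0 ≤ u := hu.1
  have h_sum : partialQuotientSum (n + 1) ((j : ℝ) + 1 + u)⁻¹ = j + 1 + partialQuotientSum n u := by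
    simpa using partialQuotientSum_succ_inv_natCast_add (d := j + 1) hu n
  rw [← ENNReal.ofReal_mul (abs_nonneg _),
    ← ENNReal.ofReal_mul (mul_nonneg (exp_pos _).le (branchWeight_nonneg hz j))]
  congr 1
  rw [abs_div, abs_neg, abs_one, abs_of_nonneg (by positivity), h_sum, mul_add, neg_add, exp_add]
  linear_combination exp (-(t * (j + 1))) * exp (-(t * partialQuotientSum n u)) *
    inv_sq_mul_gaussDensity hz hu0 j

lemma laplaceIntegral_succ_le (t : ℝ) (n : ℕ) {z : ℝ} (hz : 0 ≤ z) :
    laplaceIntegral t (n + 1) z ≤ ∑' j : ℕ, ENNReal.ofReal (exp (-(t * (j + 1))) * branchWeight z j)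
      * laplaceIntegral t n (j + 1 + z)⁻¹ :=
  calc laplaceIntegral t (n + 1) z
      = ∫⁻ y in Ioc 0 1,
          ENNReal.ofReal (exp (-(t * partialQuotientSum (n + 1) y)) * gaussDensity z y) :=
        setLIntegral_congr Ico_ae_eq_Ioc
    _ ≤ ∫⁻ y in ⋃ j : ℕ, (fun u => ((j : ℝ) + 1 + u)⁻¹) '' Ico 0 1,
          ENNReal.ofReal (exp (-(t * partialQuotientSum (n + 1) y)) * gaussDensity z y) :=
        lintegral_mono_set Ioc_subset_iUnion_image_inv_add
    _ ≤ _ := lintegral_iUnion_le _ _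
    _ = _ := tsum_congr fun j => setLIntegral_image_inv_add t n hz j

lemma laplaceIntegral_zero_le_two (t : ℝ) {z : ℝ} (hz : z ∈ Icc 0 1) :
    laplaceIntegral t 0 z ≤ 2 :=
  calc laplaceIntegral t 0 z ≤ ∫⁻ _ in Ico (0 : ℝ) 1, 2 :=
        setLIntegral_mono measurable_const fun y hy => by
          simpa [partialQuotientSum] using gaussDensity_le_two hz hy.1
    _ = 2 := by simp

lemma inv_add_mem_Icc {z : ℝ} (hz : 0 ≤ z) (j : ℕ) : ((j : ℝ) + 1 + z)⁻¹ ∈ Icc 0 1 :=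
  ⟨by positivity, inv_le_one_of_one_le₀ (by linarith [j.cast_nonneg (α := ℝ)])⟩

lemma summable_exp_mul_branchWeight {t z : ℝ} (ht : 0 ≤ t) (hz : 0 ≤ z) :
    Summable fun j : ℕ => exp (-(t * (j + 1))) * branchWeight z j :=
  (hasSum_branchWeight hz).summable.of_nonneg_of_le
    (fun j => mul_nonneg (exp_pos _).le (branchWeight_nonneg hz j))
    (fun j => mul_le_of_le_one_left (branchWeight_nonneg hz j)
      (exp_le_one_iff.2 (by nlinarith [j.cast_nonneg (α := ℝ)])))

lemma laplaceIntegral_le_two_mul_pow {t σ : ℝ} (ht : 0 ≤ t)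
    (hσ : ∀ z ∈ Icc (0 : ℝ) 1, ∑' j : ℕ, exp (-(t * (j + 1))) * branchWeight z j ≤ σ) (n : ℕ) :
    ∀ z ∈ Icc (0 : ℝ) 1, laplaceIntegral t n z ≤ 2 * ENNReal.ofReal σ ^ n := by
  induction n with
  | zero => simpa using fun z hz => laplaceIntegral_zero_le_two t hz
  | succ n ih =>
    intro z hz
    calc laplaceIntegral t (n + 1) z
        ≤ ∑' j : ℕ, ENNReal.ofReal (exp (-(t * (j + 1))) * branchWeight z j)
            * laplaceIntegral t n (j + 1 + z)⁻¹ := laplaceIntegral_succ_le t n hz.1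
      _ ≤ ∑' j : ℕ, ENNReal.ofReal (exp (-(t * (j + 1))) * branchWeight z j)
            * (2 * ENNReal.ofReal σ ^ n) :=
          ENNReal.tsum_le_tsum fun j => by gcongr; exact ih _ (inv_add_mem_Icc hz.1 j)
      _ = ENNReal.ofReal (∑' j : ℕ, exp (-(t * (j + 1))) * branchWeight z j)
            * (2 * ENNReal.ofReal σ ^ n) := by
          rw [ENNReal.tsum_mul_right, ENNReal.ofReal_tsum_of_nonneg
            (fun j => mul_nonneg (exp_pos _).le (branchWeight_nonneg hz.1 j))
            (summable_exp_mul_branchWeight ht hz.1)]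
      _ ≤ ENNReal.ofReal σ * (2 * ENNReal.ofReal σ ^ n) := by gcongr; exact hσ z hz
      _ = 2 * ENNReal.ofReal σ ^ (n + 1) := by ring

lemma half_le_one_sub_exp_neg {s : ℝ} (hs0 : 0 ≤ s) (hs : s ≤ log 2) : s / 2 ≤ 1 - exp (-s) := by
  have h_half : 1 / 2 ≤ exp (-s) := by
    calc (1 / 2 : ℝ) = exp (-log 2) := by rw [exp_neg, exp_log two_pos, one_div]
      _ ≤ exp (-s) := exp_le_exp.2 (neg_le_neg hs)
  have h_tangent : exp (-s) * (1 + s) ≤ 1 := by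
    calc exp (-s) * (1 + s) ≤ exp (-s) * exp s := by gcongr; linarith [add_one_le_exp s]
      _ = 1 := by rw [← exp_add, neg_add_cancel, exp_zero]
  nlinarith [mul_le_mul_of_nonneg_left h_half hs0]

lemma div_le_one_sub_exp_mul_branchWeight {t z : ℝ} (ht : 0 ≤ t) (hz : z ∈ Icc 0 1) {j : ℕ}
    (htj : t * (j + 1) ≤ log 2) :
    t / (12 * (j + 1)) ≤ (1 - exp (-(t * (j + 1)))) * branchWeight z j :=
  have hs : 0 ≤ t * (j + 1) := by positivity
  calc t / (12 * (j + 1)) = t * (j + 1) / 2 * (1 / (6 * (j + 1) ^ 2)) := by field_simp; ring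
    _ ≤ (1 - exp (-(t * (j + 1)))) * branchWeight z j :=
      mul_le_mul (half_le_one_sub_exp_neg hs htj) (inv_six_mul_sq_le_branchWeight hz j)
        (by positivity) (by linarith [half_le_one_sub_exp_neg hs htj])

lemma exists_tsum_exp_mul_branchWeight_le (A : ℝ) :
    ∃ t > 0, ∀ z ∈ Icc (0 : ℝ) 1,
      ∑' j : ℕ, exp (-(t * (j + 1))) * branchWeight z j ≤ exp (-(t * A)) := by
  obtain ⟨J, hJ, hJ1⟩ :=
    ((tendsto_sum_range_one_div_nat_succ_atTop.eventually_ge_atTop (12 * A)).and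
      (eventually_ge_atTop 1)).exists
  have hJ0 : (0 : ℝ) < J := by exact_mod_cast hJ1
  set t := log 2 / J with ht_def
  have ht : 0 < t := div_pos (log_pos one_lt_two) hJ0
  refine ⟨t, ht, fun z hz => ?_⟩
  set e : ℕ → ℝ := fun j => exp (-(t * (j + 1)))
  have h_summable := summable_exp_mul_branchWeight ht.le hz.1
  have h_deficit : t * A ≤ ∑' j, (1 - e j) * branchWeight z j := by
    have h_summable' : Summable fun j => (1 - e j) * branchWeight z j := by
      simpa [sub_mul] using (hasSum_branchWeight hz.1).summable.sub h_summable
    calc t * A ≤ t / 12 * ∑ j ∈ Finset.range J, 1 / ((j : ℝ) + 1) := by nlinarith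
      _ = ∑ j ∈ Finset.range J, t / (12 * (j + 1)) := by
        rw [Finset.mul_sum]; congr! 1 with j; field_simp
      _ ≤ ∑ j ∈ Finset.range J, (1 - e j) * branchWeight z j :=
        Finset.sum_le_sum fun j hj => div_le_one_sub_exp_mul_branchWeight ht.le hz <| by
          have : (j : ℝ) + 1 ≤ J := by exact_mod_cast Finset.mem_range.1 hj
          rw [ht_def, div_mul_eq_mul_div, div_le_iff₀ hJ0]
          nlinarith [log_pos one_lt_two]
      _ ≤ ∑' j, (1 - e j) * branchWeight z j :=
        h_summable'.sum_le_tsum _ fun j _ => mul_nonneg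
          (sub_nonneg.2 (exp_le_one_iff.2 (by simp only [neg_nonpos]; positivity)))
          (branchWeight_nonneg hz.1 j)
  have h_split : ∑' j, e j * branchWeight z j = 1 - ∑' j, (1 - e j) * branchWeight z j := by
    simp only [sub_mul, one_mul]
    rw [(hasSum_branchWeight hz.1).summable.tsum_sub h_summable, (hasSum_branchWeight hz.1).tsum_eq]
    ring
  rw [h_split]
  linarith [add_one_le_exp (-(t * A))]

lemma exists_measure_partialQuotientSum_le_le_geometric (M : ℝ) : ∃ t > 0, ∀ n : ℕ,
    volume.restrict (Ico 0 1) {x | partialQuotientSum n x ≤ M * n}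
      ≤ 2 * ENNReal.ofReal (exp (-t)) ^ n := by
  obtain ⟨t, ht, hσ⟩ := exists_tsum_exp_mul_branchWeight_le (M + 1)
  refine ⟨t, ht, fun n => ?_⟩
  set μ := volume.restrict (Ico (0 : ℝ) 1)
  have h_markov : ENNReal.ofReal (exp (-(t * (M * n)))) * μ {x | partialQuotientSum n x ≤ M * n}
      ≤ laplaceIntegral t n 0 :=
    calc _ ≤ ENNReal.ofReal (exp (-(t * (M * n)))) * μ {x | ENNReal.ofReal (exp (-(t * (M * n))))
            ≤ ENNReal.ofReal (exp (-(t * partialQuotientSum n x)))} := by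
          gcongr with x
          intro h_le
          exact ENNReal.ofReal_le_ofReal (exp_le_exp.2 (by nlinarith))
      _ ≤ ∫⁻ x, ENNReal.ofReal (exp (-(t * partialQuotientSum n x))) ∂μ :=
          mul_meas_ge_le_lintegral₀ (by fun_prop) _
      _ = laplaceIntegral t n 0 := by simp [laplaceIntegral, μ, gaussDensity_zero]
  have h_bound := laplaceIntegral_le_two_mul_pow ht.le hσ n 0 ⟨le_rfl, zero_le_one⟩
  calc μ {x | partialQuotientSum n x ≤ M * n}
      = ENNReal.ofReal (exp (t * (M * n)))
          * (ENNReal.ofReal (exp (-(t * (M * n)))) * μ {x | partialQuotientSum n x ≤ M * n}) := by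
        rw [← mul_assoc, ← ENNReal.ofReal_mul (exp_pos _).le, ← exp_add, add_neg_cancel, exp_zero,
          ENNReal.ofReal_one, one_mul]
    _ ≤ ENNReal.ofReal (exp (t * (M * n))) * (2 * ENNReal.ofReal (exp (-(t * (M + 1)))) ^ n) :=
        mul_le_mul_of_nonneg_left (h_markov.trans h_bound) zero_le
    _ = 2 * ENNReal.ofReal (exp (-t)) ^ n := by
        rw [← ENNReal.ofReal_pow (exp_pos _).le, ← ENNReal.ofReal_pow (exp_pos _).le,
          mul_left_comm, ← ENNReal.ofReal_mul (exp_pos _).le, ← exp_nat_mul, ← exp_nat_mul,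
          ← exp_add]
        congr 3
        ring

lemma ae_restrict_Ico_eventually_lt_partialQuotientSum (M : ℝ) :
    ∀ᵐ x ∂volume.restrict (Ico 0 1), ∀ᶠ n in atTop, M * n < partialQuotientSum n x := by
  obtain ⟨t, ht, h_le⟩ := exists_measure_partialQuotientSum_le_le_geometric M
  have h_ratio : ENNReal.ofReal (exp (-t)) < 1 :=
    ENNReal.ofReal_lt_one.2 (exp_lt_one_iff.2 (neg_lt_zero.2 ht))
  have h_summable :
      ∑' n : ℕ, volume.restrict (Ico 0 1) {x | partialQuotientSum n x ≤ M * n} ≠ ∞ := by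
    refine ne_top_of_le_ne_top ?_ (ENNReal.tsum_le_tsum h_le)
    rw [ENNReal.tsum_mul_left, ENNReal.tsum_geometric]
    exact ENNReal.mul_ne_top ENNReal.ofNat_ne_top
      (ENNReal.inv_ne_top.2 (tsub_pos_of_lt h_ratio).ne')
  filter_upwards [ae_eventually_notMem h_summable] with x hx
  simpa using hx

lemma tendsto_div_natCast_atTop_of_eventually_lt {u : ℕ → ℝ}
    (h : ∀ M : ℕ, ∀ᶠ n in atTop, M * n < u n) : Tendsto (fun n => u n / n) atTop atTop := by
  refine tendsto_atTop.2 fun b => ?_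
  filter_upwards [h ⌈b⌉₊, eventually_gt_atTop 0] with n hn hn0
  have hn0' : (0 : ℝ) < n := by exact_mod_cast hn0
  rw [le_div_iff₀ hn0']
  nlinarith [Nat.le_ceil b]

lemma ae_fract_of_ae_restrict_Ico {p : ℝ → Prop} (h : ∀ᵐ x ∂volume.restrict (Ico 0 1), p x) :
    ∀ᵐ r : ℝ, p (Int.fract r) := by
  rw [ae_restrict_iff' measurableSet_Ico] at h
  have h_shift (k : ℤ) : ∀ᵐ r : ℝ, r - k ∈ Ico 0 1 → p (r - k) :=
    (measurePreserving_sub_right volume (k : ℝ)).quasiMeasurePreserving.ae h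
  filter_upwards [ae_all_iff.2 h_shift] with r hr
  exact hr ⌊r⌋ ⟨Int.fract_nonneg r, Int.fract_lt_one r⟩

/-- For Lebesgue-almost every real number `r`, the arithmetic mean
`(a₁(r) + ⋯ + aₙ(r))/n` of the partial quotients
`aₖ(r) = ⌊1 / (T^{k-1} {r})⌋` of the continued fraction expansion of `r`
tends to infinity. -/
theorem ae_arithmetic_mean_partial_quotients_tendsto_atTop :
    ∀ᵐ r : ℝ ∂MeasureTheory.volume,
      Filter.Tendsto
        (fun n : ℕ =>
          (∑ k ∈ Finset.range n, ((⌊(gaussMap^[k] (Int.fract r))⁻¹⌋ : ℝ))) / n)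
        Filter.atTop Filter.atTop := by
  refine ae_fract_of_ae_restrict_Ico
    (p := fun x => Tendsto (fun n : ℕ => partialQuotientSum n x / n) atTop atTop) ?_
  filter_upwards [ae_all_iff.2 fun M : ℕ => ae_restrict_Ico_eventually_lt_partialQuotientSum M]
    with x hx
  exact tendsto_div_natCast_atTop_of_eventually_lt hx
end

section
/- If the Mertens function satisfies |M(x)| ≤ C·x^{1/2} for all x ≥ 1 and some constant C, then the Riemann zeta function has no zeros with real part greater than 1/2 (i.e., the Riemann Hypothesis holds). -/
/-!
Partial summation gives `L(μ, s) = s ∫₁^∞ M(t) t^(-s-1) dt` for `re s > 1`. If `M(t) = O(t^r)`,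
this integral is (up to `s ↦ -s`) the Mellin transform of `M`, hence holomorphic on `re s > r`.
So `ζ(s) · s ∫₁^∞ M(t) t^(-s-1) dt` is holomorphic on the connected set `{re s > r} \ {1}` and
equals `ζ(s) L(μ, s) = 1` for `re s > 1`; by the identity theorem it is `1` on the whole set, and
`ζ` cannot vanish there.
-/

open ArithmeticFunction Asymptotics Filter MeasureTheory Set
open scoped ArithmeticFunction.Moebius LSeries.notation Topology

theorem isPreconnected_setOf_lt_re_sdiff_singleton (a : ℝ) (w : ℂ) :
    IsPreconnected ({z : ℂ | a < z.re} \ {w}) := by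
  have hH : Convex ℝ {z : ℂ | a < z.re} := convex_halfSpace_re_gt a
  rcases le_or_gt w.re a with hw | hw
  · rw [sdiff_singleton_eq_self (show w ∉ {z : ℂ | a < z.re} from not_lt.mpr hw)]
    exact hH.isPreconnected
  -- three open half-planes with `w` on their boundaries cover `ℂ \ {w}`
  have above := (hH.inter (convex_halfSpace_im_gt w.im)).isPreconnected
  have left := (hH.inter (convex_halfSpace_re_lt w.re)).isPreconnected
  have below_right := (hH.inter (convex_halfSpace_lt (Complex.imLm - Complex.reLm).isLinear
    (w.im - w.re))).isPreconnected
  have h_union := (above.union ⟨(a + w.re) / 2, w.im + 1⟩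
    (by constructor <;> norm_num; linarith) (by constructor <;> norm_num <;> linarith) left).union
    ⟨w.re + 2, w.im + 1⟩ (by left; constructor <;> norm_num; linarith)
    (by constructor <;> norm_num [Complex.imLm_coe, Complex.reLm_coe] <;> linarith) below_right
  convert h_union using 1
  ext z
  simp only [Set.mem_sdiff, mem_ofPred_eq, mem_singleton_iff, mem_union, mem_inter_iff,
    LinearMap.sub_apply, Complex.imLm_coe, Complex.reLm_coe]
  constructor
  · rintro ⟨hz, hne⟩
    by_contra! h
    have h_im := h.1.1 hz
    have h_re := h.1.2 hz
    have h_diag := h.2 hz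
    exact hne (Complex.ext (by linarith) (by linarith))
  · rintro ((⟨hz, h⟩ | ⟨hz, h⟩) | ⟨hz, h⟩) <;> refine ⟨hz, ?_⟩ <;> rintro rfl <;> simp at h

theorem differentiableAt_integral_sum_mul_cpow (f : ℕ → ℂ) {r : ℝ}
    (hO : (fun t : ℝ ↦ ∑ k ∈ Finset.Icc 1 ⌊t⌋₊, f k) =O[atTop] (· ^ r)) {s : ℂ}
    (hs : r < s.re) :
    DifferentiableAt ℂ (fun z : ℂ ↦
      ∫ t in Ioi (1 : ℝ), (∑ k ∈ Finset.Icc 1 ⌊t⌋₊, f k) * (t : ℂ) ^ (-(z + 1))) s := by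
  set A : ℝ → ℂ := fun t ↦ ∑ k ∈ Finset.Icc 1 ⌊t⌋₊, f k
  have hA_zero : ∀ t < 1, A t = 0 := fun t ht ↦ by
    simp [A, Nat.floor_eq_zero.mpr ht]
  have h_mellin : (fun z : ℂ ↦ ∫ t in Ioi (1 : ℝ), A t * (t : ℂ) ^ (-(z + 1))) =
      fun z ↦ mellin A (-z) := by
    funext z
    rw [mellin, ← integral_Ici_eq_integral_Ioi, setIntegral_eq_of_subset_of_forall_sdiff_eq_zero
      measurableSet_Ioi (Ici_subset_Ioi.mpr one_pos) fun t ht ↦ ?_]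
    · refine setIntegral_congr_fun measurableSet_Ici fun t _ ↦ ?_
      rw [smul_eq_mul, mul_comm, neg_add']
    · rw [hA_zero t (not_le.mp ht.2), smul_zero]
  have h_loc : LocallyIntegrableOn A (Ioi 0) := by
    simpa using (locallyIntegrableOn_mul_sum_Icc f le_rfl
      ((locallyIntegrable_const (1 : ℂ)).locallyIntegrableOn _)).mono_set Ioi_subset_Ici_self
  have h_bot : A =O[𝓝[>] 0] (· ^ (-(-s.re - 1))) := by
    refine EventuallyEq.trans_isBigO ?_ (isBigO_zero _ _)
    filter_upwards [Ioo_mem_nhdsGT one_pos] with t ht using hA_zero t ht.2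
  have h_diff : DifferentiableAt ℂ (mellin A) (-s) :=
    mellin_differentiableAt_of_isBigO_rpow (a := -r) h_loc (by simpa using hO)
      (by simpa using hs) h_bot (by simp)
  rw [h_mellin]
  exact h_diff.comp s differentiableAt_id.neg

theorem LSeries_moebius_eq_mul_integral {s : ℂ} (hs : 1 < s.re) :
    L ↗μ s = s * ∫ t in Ioi (1 : ℝ), (∑ k ∈ Finset.Icc 1 ⌊t⌋₊, ↗μ k) * (t : ℂ) ^ (-(s + 1)) := by
  refine LSeries_eq_mul_integral' _ zero_le_one hs (isBigO_of_le _ fun n ↦ ?_)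
  calc ‖∑ k ∈ Finset.Icc 1 n, ‖(μ k : ℂ)‖‖ ≤ ∑ k ∈ Finset.Icc 1 n, (1 : ℝ) := by
        rw [Real.norm_of_nonneg (by positivity)]
        refine Finset.sum_le_sum fun k _ ↦ ?_
        exact_mod_cast abs_moebius_le_one
    _ = ‖(n : ℝ) ^ (1 : ℝ)‖ := by simp

theorem riemannZeta_ne_zero_of_isBigO_sum_moebius {r : ℝ}
    (hO : (fun t : ℝ ↦ ∑ k ∈ Finset.Icc 1 ⌊t⌋₊, (μ k : ℂ)) =O[atTop] (· ^ r)) {s : ℂ}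
    (hs : r < s.re) : riemannZeta s ≠ 0 := by
  rcases le_or_gt 1 s.re with h1 | h1
  · exact riemannZeta_ne_zero_of_one_le_re h1
  set F : ℂ → ℂ := fun z ↦
    ∫ t in Ioi (1 : ℝ), (∑ k ∈ Finset.Icc 1 ⌊t⌋₊, (μ k : ℂ)) * (t : ℂ) ^ (-(z + 1))
  set U : Set ℂ := {z | r < z.re} \ {1}
  have h_analytic : AnalyticOnNhd ℂ (fun z ↦ riemannZeta z * (z * F z)) U := by
    refine DifferentiableOn.analyticOnNhd (fun z hz ↦ ?_)
      ((isOpen_lt continuous_const Complex.continuous_re).sdiff isClosed_singleton)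
    exact ((differentiableAt_riemannZeta hz.2).mul
      (differentiableAt_id.mul (differentiableAt_integral_sum_mul_cpow _ hO hz.1)))
      |>.differentiableWithinAt
  have h_one : ∀ z : ℂ, 1 < z.re → riemannZeta z * (z * F z) = 1 := fun z hz ↦ by
    rw [← LSeries_zeta_eq_riemannZeta hz, ← LSeries_zeta_mul_Lseries_moebius hz,
      LSeries_moebius_eq_mul_integral hz]
  have h_two : (fun z ↦ riemannZeta z * (z * F z)) =ᶠ[𝓝 2] fun _ ↦ 1 :=
    eventually_of_mem ((isOpen_lt continuous_const Complex.continuous_re).mem_nhds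
      (by norm_num : (1 : ℝ) < (2 : ℂ).re)) h_one
  have h_eq := h_analytic.eqOn_of_preconnected_of_eventuallyEq analyticOnNhd_const
    (isPreconnected_setOf_lt_re_sdiff_singleton r 1) ⟨by norm_num; linarith, by norm_num⟩ h_two
  intro h_zero
  simpa [h_zero] using h_eq (show s ∈ U from ⟨hs, by rintro rfl; norm_num at h1⟩)

/-- If the Mertens function `M(x) = ∑_{n ≤ x} μ(n)` satisfies `|M(x)| ≤ C √x`
for all `x ≥ 1`, then the Riemann zeta function has no zeros of real part
greater than `1/2`, i.e. the Riemann Hypothesis holds. -/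
theorem RH_of_mertens_bound
    (C : ℝ)
    (hM : ∀ x : ℝ, 1 ≤ x →
      |(∑ n ∈ Finset.Icc 1 ⌊x⌋₊, (ArithmeticFunction.moebius n : ℝ))| ≤
        C * x ^ ((1 : ℝ) / 2)) :
    ∀ s : ℂ, 1 / 2 < s.re → riemannZeta s ≠ 0 := by
  refine fun s hs ↦ riemannZeta_ne_zero_of_isBigO_sum_moebius (IsBigO.of_bound C ?_) hs
  filter_upwards [eventually_ge_atTop 1] with x hx
  calc ‖∑ k ∈ Finset.Icc 1 ⌊x⌋₊, (μ k : ℂ)‖ = |∑ k ∈ Finset.Icc 1 ⌊x⌋₊, (μ k : ℝ)| := by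
        rw [← Real.norm_eq_abs, ← Complex.norm_real]
        push_cast
        rfl
    _ ≤ C * x ^ ((1 : ℝ) / 2) := hM x hx
    _ = C * ‖x ^ ((1 : ℝ) / 2)‖ := by rw [Real.norm_of_nonneg (by positivity)]
end
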